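/- For phylogenetic trees T₁, T₂ with n leaves labeled 1,…,n, if M(T₁) = M(T₂) then T₁ and T₂ are isomorphic as leaf-labeled rooted trees. -/

import Mathlib

open Equiv Finset
open scoped Classical

/-- A phylogenetic tree with `n` leaves labeled `1,…,n`: a rooted tree (every node is
reached from the root by iterating the parent map) with no outdegree-1 nodes, whose
leaves are injectively labeled by `1,…,n`. -/
structure PhyloTree (n : ℕ) where
  /-- number of nodes -/
  numNodes : ℕ
  numNodes_pos : 0 < numNodes
  /-- the parent map (the root is its own parent); the arcs of the tree are
  (parent v, v) for v ≠ root -/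
  parent : Fin numNodes → Fin numNodes
  root : Fin numNodes
  parent_root : parent root = root
  /-- every node is reachable from the root: iterating `parent` reaches the root -/
  reach_root : ∀ v, ∃ k, parent^[k] v = root
  /-- no node has outdegree 1 -/
  no_outdegree_one : ∀ v,
    (Finset.univ.filter fun w => parent w = v ∧ w ≠ root).card ≠ 1
  /-- the labeling of the nodes; only its values on leaves matter -/
  labelOf : Fin numNodes → ℕ
  /-- the leaves (nodes without children) are labeled bijectively by `1,…,n` -/
  label_bij : Set.BijOn labelOf
    {v | (Finset.univ.filter fun w => parent w = v ∧ w ≠ root) = ∅} (Set.Icc 1 n)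

namespace PhyloTree

variable {n : ℕ} (T : PhyloTree n)

/-- The children of a node. -/
def children (v : Fin T.numNodes) : Finset (Fin T.numNodes) :=
  Finset.univ.filter fun w => T.parent w = v ∧ w ≠ T.root

/-- A leaf is a node without children. -/
def IsLeaf (v : Fin T.numNodes) : Prop := T.children v = ∅

/-- The internal nodes of `T`. -/
noncomputable def internals : Finset (Fin T.numNodes) :=
  Finset.univ.filter fun v => ¬ T.IsLeaf v

/-- The height of a node: the length of a longest directed path from it to a leaf. -/
noncomputable def height (v : Fin T.numNodes) : ℕ :=
  sSup {k | ∃ f : Fin (k + 1) → Fin T.numNodes, f 0 = v ∧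
    (∀ i : Fin k, f i.succ ∈ T.children (f i.castSucc)) ∧ T.IsLeaf (f (Fin.last k))}

/-- The smallest `ℓ`-label of a child of `v`. -/
noncomputable def minChildLabel (ℓ : Fin T.numNodes → ℕ) (v : Fin T.numNodes) : ℕ :=
  sInf (ℓ '' (T.children v : Set (Fin T.numNodes)))

/-- `ℓ` is the bottom-up ordering of `T`: an injective map `V → {1,…,|V|}` that
(a) extends the leaf labels, (b) is increasing with height, and (c) for internal nodes
of equal height, is increasing with the minimum label of their children. -/
noncomputable def IsBUO (ℓ : Fin T.numNodes → ℕ) : Prop :=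
  Function.Injective ℓ ∧ (∀ v, ℓ v ∈ Set.Icc 1 T.numNodes) ∧
  (∀ v, T.IsLeaf v → ℓ v = T.labelOf v) ∧
  (∀ u v, T.height u < T.height v → ℓ u < ℓ v) ∧
  (∀ u v, 0 < T.height u → T.height u = T.height v →
    T.minChildLabel ℓ u < T.minChildLabel ℓ v → ℓ u < ℓ v)

/-- The matching representation of `T` (relative to its bottom-up ordering `ℓ`):
the family of the sets `ℓ(children(u))` over the internal nodes `u`. -/
noncomputable def matchRep (ℓ : Fin T.numNodes → ℕ) : Finset (Finset ℕ) :=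
  T.internals.image fun u => (T.children u).image ℓ

/-- The cycle `κ(S) = (i₁, i₂, …, i_k)` associated to a set `S = {i₁ < ⋯ < i_k}`
(the identity if `S` is a singleton or empty). -/
def kappa (S : Finset ℕ) : Equiv.Perm ℕ := (S.sort (· ≤ ·)).formPerm

/-- The matching permutation of `T` (relative to its bottom-up ordering `ℓ`): the
product of the cycles associated to the members of the matching representation; it
fixes every number not in `{1,…,|V|−1}` (in particular it lies in `S_{2n−2}`). -/
noncomputable def matchPerm (ℓ : Fin T.numNodes → ℕ) : Equiv.Perm ℕ :=
  ((T.internals.sort (· ≤ ·)).map fun u => kappa ((T.children u).image ℓ)).prod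

end PhyloTree

namespace PhyloTree

variable {n : ℕ} {T : PhyloTree n}

-- ### new lemmas

lemma mem_children {v w : Fin T.numNodes} :
    w ∈ T.children v ↔ T.parent w = v ∧ w ≠ T.root := by
  simp [children]

noncomputable def dep (T : PhyloTree n) (v : Fin T.numNodes) : ℕ :=
  Nat.find (T.reach_root v)

lemma dep_spec (v : Fin T.numNodes) : T.parent^[T.dep v] v = T.root :=
  Nat.find_spec (T.reach_root v)

lemma dep_eq_zero {v : Fin T.numNodes} : T.dep v = 0 ↔ v = T.root := by
  constructor
  · intro h
    have := dep_spec v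
    rwa [h] at this
  · rintro rfl
    simp [dep, Nat.find_eq_zero]

lemma dep_child {v w : Fin T.numNodes} (h : w ∈ T.children v) :
    T.dep w = T.dep v + 1 := by
  rw [mem_children] at h
  have h1 : T.dep w ≤ T.dep v + 1 := by
    apply Nat.find_le
    rw [Function.iterate_succ_apply, h.1]
    exact dep_spec v
  have h0 : T.dep w ≠ 0 := fun hz => h.2 (dep_eq_zero.mp hz)
  obtain ⟨d, hd⟩ : ∃ d, T.dep w = d + 1 := ⟨T.dep w - 1, by omega⟩
  have h2 : T.dep v ≤ d := by
    apply Nat.find_le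
    have := dep_spec w
    rw [hd, Function.iterate_succ_apply, h.1] at this
    exact this
  omega

lemma dep_lt (v : Fin T.numNodes) : T.dep v < T.numNodes := by
  have hinj : Function.Injective
      (fun i : Fin (T.dep v + 1) => T.parent^[i.val] v) := by
    have key : ∀ i j : ℕ, i < j → j ≤ T.dep v →
        T.parent^[i] v ≠ T.parent^[j] v := by
      intro i j hij hj heq
      have hroot : T.parent^[i + (T.dep v - j)] v = T.root := by
        rw [Nat.add_comm, Function.iterate_add_apply, heq,
          ← Function.iterate_add_apply]
        have he : T.dep v - j + j = T.dep v := by omega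
        rw [he]
        exact dep_spec v
      exact Nat.find_min (T.reach_root v) (m := i + (T.dep v - j)) (show i + (T.dep v - j) < T.dep v by omega) hroot
    intro i j hij
    by_contra hne
    rcases Nat.lt_or_ge i.val j.val with h | h
    · exact key i.val j.val h (Nat.lt_succ_iff.mp j.isLt) (by simpa using hij)
    · have : j.val < i.val := lt_of_le_of_ne h (fun e => hne (Fin.ext e.symm))
      exact key j.val i.val this (Nat.lt_succ_iff.mp i.isLt) (by simpa using hij.symm)
  have := Fintype.card_le_of_injective _ hinj
  simpa using this


def IsPath (T : PhyloTree n) (k : ℕ) (f : ℕ → Fin T.numNodes)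
    (v : Fin T.numNodes) : Prop :=
  f 0 = v ∧ (∀ i < k, f (i + 1) ∈ T.children (f i)) ∧ T.IsLeaf (f k)

lemma height_eq (v : Fin T.numNodes) :
    T.height v = sSup {k | ∃ f, T.IsPath k f v} := by
  unfold height
  congr 1
  ext k
  constructor
  · rintro ⟨f, h0, hstep, hleaf⟩
    refine ⟨fun i => f ⟨min i k, by omega⟩, ?_, ?_, ?_⟩
    · rw [← h0]
      exact congrArg f (Fin.ext (by simp))
    · intro i hi
      have := hstep ⟨i, hi⟩
      have e1 : (⟨i, hi⟩ : Fin k).succ = (⟨min (i+1) k, by omega⟩ : Fin (k+1)) := by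
        ext; simp; omega
      have e2 : (⟨i, hi⟩ : Fin k).castSucc = (⟨min i k, by omega⟩ : Fin (k+1)) := by
        ext; simp; omega
      rwa [e1, e2] at this
    · show T.IsLeaf (f ⟨min k k, by omega⟩)
      have he : (⟨min k k, by omega⟩ : Fin (k+1)) = Fin.last k := by ext; simp
      rw [he]; exact hleaf
  · rintro ⟨F, h0, hstep, hleaf⟩
    refine ⟨fun i => F i.val, h0, ?_, hleaf⟩
    intro i
    exact hstep i.val i.isLt

lemma isPath_le {k : ℕ} {f : ℕ → Fin T.numNodes} {v : Fin T.numNodes}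
    (h : T.IsPath k f v) : k < T.numNodes := by
  have hdep : ∀ i ≤ k, T.dep (f i) = T.dep v + i := by
    intro i
    induction i with
    | zero => intro _; rw [h.1]; omega
    | succ j ihj =>
      intro hj
      have := dep_child (h.2.1 j (by omega))
      rw [this, ihj (by omega)]
      omega
  have := dep_lt (f k)
  rw [hdep k le_rfl] at this
  omega

lemma height_set_nonempty (v : Fin T.numNodes) :
    ∃ k f, T.IsPath k f v := by
  have H : ∀ m (v : Fin T.numNodes), T.numNodes - T.dep v ≤ m →
      ∃ k f, T.IsPath k f v := by
    intro m
    induction m with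
    | zero => intro v hv; have := dep_lt v; omega
    | succ m ihm =>
      intro v hv
      by_cases hleaf : T.IsLeaf v
      · exact ⟨0, fun _ => v, rfl, fun i hi => absurd hi (by omega), hleaf⟩
      · have hne : T.children v ≠ ∅ := hleaf
        obtain ⟨w, hw⟩ := Finset.nonempty_iff_ne_empty.mpr hne
        have hdw := dep_child hw
        obtain ⟨k, F, hF0, hFs, hFl⟩ := ihm w (by omega)
        refine ⟨k + 1, fun i => if i = 0 then v else F (i - 1), by simp, ?_, ?_⟩
        · intro i hi
          rcases Nat.eq_zero_or_pos i with rfl | hpos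
          · simpa [hF0] using hw
          · have h1 : i + 1 ≠ 0 := by omega
            have h2 : i ≠ 0 := by omega
            simp only [h1, h2, if_neg, if_false]
            have : i - 1 + 1 = i ∧ i + 1 - 1 = i := by omega
            rw [← this.1]
            have := hFs (i-1) (by omega)
            simp only [Nat.add_sub_cancel] at this ⊢
            exact this
        · simpa using hFl
  exact H T.numNodes v (by omega)

lemma height_mem (v : Fin T.numNodes) : ∃ f, T.IsPath (T.height v) f v := by
  rw [height_eq]
  have hne : {k | ∃ f, T.IsPath k f v}.Nonempty := by
    obtain ⟨k, f, h⟩ := height_set_nonempty v; exact ⟨k, f, h⟩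
  have hbdd : BddAbove {k | ∃ f, T.IsPath k f v} := by
    refine ⟨T.numNodes, fun k hk => ?_⟩
    obtain ⟨f, hf⟩ := hk
    exact (isPath_le hf).le
  exact Nat.sSup_mem hne hbdd

lemma le_height {k : ℕ} {f : ℕ → Fin T.numNodes} {v : Fin T.numNodes}
    (h : T.IsPath k f v) : k ≤ T.height v := by
  rw [height_eq]
  refine le_csSup ⟨T.numNodes, fun k hk => ?_⟩ ⟨f, h⟩
  obtain ⟨g, hg⟩ := hk
  exact (isPath_le hg).le

lemma height_leaf {v : Fin T.numNodes} (h : T.IsLeaf v) : T.height v = 0 := by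
  obtain ⟨f, hf⟩ := height_mem v
  by_contra hne
  have := hf.2.1 0 (by omega)
  rw [hf.1] at this
  rw [IsLeaf] at h
  rw [h] at this
  simp at this

lemma not_isLeaf_of_height_pos {v : Fin T.numNodes} (h : 0 < T.height v) :
    ¬ T.IsLeaf v := fun hl => by rw [height_leaf hl] at h; omega

lemma height_eq_zero {v : Fin T.numNodes} (h : T.height v = 0) : T.IsLeaf v := by
  obtain ⟨f, hf⟩ := height_mem v
  rw [h] at hf
  rw [← hf.1]
  exact hf.2.2

lemma height_child_lt {v w : Fin T.numNodes} (h : w ∈ T.children v) :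
    T.height w < T.height v := by
  obtain ⟨f, hf⟩ := height_mem w
  have : T.IsPath (T.height w + 1) (fun i => if i = 0 then v else f (i - 1)) v := by
    refine ⟨by simp, ?_, by simpa using hf.2.2⟩
    intro i hi
    rcases Nat.eq_zero_or_pos i with rfl | hpos
    · simpa [hf.1] using h
    · have h1 : i + 1 ≠ 0 := by omega
      have h2 : i ≠ 0 := by omega
      simp only [h1, h2, if_neg, if_false]
      have := hf.2.1 (i-1) (by omega)
      convert this using 2 <;> omega
  have := le_height this
  omega

lemma height_internal {v : Fin T.numNodes} (h : ¬ T.IsLeaf v) :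
    ∃ w ∈ T.children v, T.height v = T.height w + 1 := by
  obtain ⟨f, hf⟩ := height_mem v
  have hpos : 0 < T.height v := by
    rcases Nat.eq_zero_or_pos (T.height v) with hz | hp
    · exact absurd (height_eq_zero hz) h
    · exact hp
  refine ⟨f 1, by rw [← hf.1]; exact hf.2.1 0 hpos, ?_⟩
  have htail : T.IsPath (T.height v - 1) (fun i => f (i + 1)) (f 1) := by
    refine ⟨rfl, ?_, ?_⟩
    · intro i hi
      exact hf.2.1 (i+1) (by omega)
    · show T.IsLeaf (f (T.height v - 1 + 1))
      have he : T.height v - 1 + 1 = T.height v := by omega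
      rw [he]; exact hf.2.2
  have h1 : T.height v - 1 ≤ T.height (f 1) := le_height htail
  have h2 : T.height (f 1) < T.height v := by
    apply height_child_lt
    rw [← hf.1]; exact hf.2.1 0 hpos
  omega



variable {ℓ : Fin T.numNodes → ℕ}

lemma label_child_lt (h : T.IsBUO ℓ) {v w : Fin T.numNodes}
    (hw : w ∈ T.children v) : ℓ w < ℓ v :=
  h.2.2.2.1 _ _ (height_child_lt hw)

lemma label_surj (h : T.IsBUO ℓ) {a : ℕ} (h1 : 1 ≤ a) (h2 : a ≤ T.numNodes) :
    ∃ v, ℓ v = a := by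
  have hsub : Finset.image ℓ Finset.univ ⊆ Finset.Icc 1 T.numNodes := by
    intro m hm
    simp only [Finset.mem_image] at hm
    obtain ⟨v, _, rfl⟩ := hm
    have := h.2.1 v
    simp only [Set.mem_Icc] at this
    simp [Finset.mem_Icc, this]
  have hcard : (Finset.Icc 1 T.numNodes).card ≤ (Finset.image ℓ Finset.univ).card := by
    rw [Finset.card_image_of_injective _ h.1, Nat.card_Icc]
    simp
  have := Finset.eq_of_subset_of_card_le hsub hcard
  have hmem : a ∈ Finset.image ℓ Finset.univ := by
    rw [this]; simp [Finset.mem_Icc]; omega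
  simp only [Finset.mem_image] at hmem
  obtain ⟨v, _, hv⟩ := hmem
  exact ⟨v, hv⟩

lemma leafSet_eq :
    {v | (Finset.univ.filter fun w => T.parent w = v ∧ w ≠ T.root) = ∅}
      = {v : Fin T.numNodes | T.IsLeaf v} := rfl

lemma isLeaf_label_le (h : T.IsBUO ℓ) {v : Fin T.numNodes} :
    T.IsLeaf v ↔ ℓ v ≤ n := by
  constructor
  · intro hv
    rw [h.2.2.1 v hv]
    have := T.label_bij.mapsTo (show v ∈ _ from hv)
    simpa using this.2
  · intro hle
    have h1 : 1 ≤ ℓ v := by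
      have := h.2.1 v; simp only [Set.mem_Icc] at this; exact this.1
    obtain ⟨w, hw, hwl⟩ := T.label_bij.surjOn
      (show ℓ v ∈ Set.Icc 1 n by simp only [Set.mem_Icc]; omega)
    have : ℓ w = ℓ v := by rw [h.2.2.1 w hw, hwl]
    rwa [← h.1 this]

lemma minChildLabel_eq (v : Fin T.numNodes) :
    T.minChildLabel ℓ v = sInf ((T.children v).image ℓ : Set ℕ) := by
  rw [minChildLabel, Finset.coe_image]

lemma minChildLabel_mem (hv : ¬ T.IsLeaf v) :
    T.minChildLabel ℓ v ∈ (T.children v).image ℓ := by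
  rw [minChildLabel_eq]
  have hne : ((T.children v).image ℓ : Set ℕ).Nonempty := by
    simp only [Finset.coe_nonempty, Finset.image_nonempty]
    exact Finset.nonempty_iff_ne_empty.mpr hv
  have := Nat.sInf_mem hne
  exact_mod_cast this

lemma eq_of_mem_children {u v x : Fin T.numNodes} (hu : x ∈ T.children u)
    (hv : x ∈ T.children v) : u = v := by
  rw [mem_children] at hu hv
  rw [← hu.1, hv.1]

lemma mem_matchRep {B : Finset ℕ} :
    B ∈ T.matchRep ℓ ↔ ∃ u, ¬ T.IsLeaf u ∧ (T.children u).image ℓ = B := by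
  simp [matchRep, internals]

lemma matchRep_biUnion :
    (T.matchRep ℓ).biUnion id = (Finset.univ.erase T.root).image ℓ := by
  ext m
  simp only [Finset.mem_biUnion, id, Finset.mem_image, Finset.mem_erase,
    Finset.mem_univ, and_true]
  constructor
  · rintro ⟨B, hB, hm⟩
    rw [mem_matchRep] at hB
    obtain ⟨u, _, rfl⟩ := hB
    simp only [Finset.mem_image] at hm
    obtain ⟨w, hw, rfl⟩ := hm
    exact ⟨w, (mem_children.mp hw).2, rfl⟩
  · rintro ⟨w, hw, rfl⟩
    have hwc : w ∈ T.children (T.parent w) := mem_children.mpr ⟨rfl, hw⟩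
    refine ⟨(T.children (T.parent w)).image ℓ, ?_, Finset.mem_image_of_mem _ hwc⟩
    rw [mem_matchRep]
    refine ⟨T.parent w, ?_, rfl⟩
    intro hleaf
    rw [IsLeaf] at hleaf
    rw [hleaf] at hwc
    simp at hwc

lemma buo_lt (h : T.IsBUO ℓ) {u v : Fin T.numNodes} (hu : ¬ T.IsLeaf u)
    (hcmp : T.height u < T.height v ∨
      (T.height u = T.height v ∧ T.minChildLabel ℓ u < T.minChildLabel ℓ v)) :
    ℓ u < ℓ v := by
  rcases hcmp with hlt | ⟨heq, hm⟩
  · exact h.2.2.2.1 _ _ hlt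
  · have hpos : 0 < T.height u := by
      rcases Nat.eq_zero_or_pos (T.height u) with hz | hp
      · exact absurd (height_eq_zero hz) hu
      · exact hp
    exact h.2.2.2.2 _ _ hpos heq hm


end PhyloTree


/-- A label-preserving isomorphism of phylogenetic trees: a bijection of the nodes
preserving the root, the arcs, and the leaf labels. -/
def PhyloIso {n : ℕ} (T₁ T₂ : PhyloTree n) : Prop :=
  ∃ e : Fin T₁.numNodes ≃ Fin T₂.numNodes,
    e T₁.root = T₂.root ∧
    (∀ v, e (T₁.parent v) = T₂.parent (e v)) ∧
    (∀ v, T₁.IsLeaf v → T₂.labelOf (e v) = T₁.labelOf v)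

/-- The least number of transpositions whose product equals `σ`. -/
noncomputable def minSwaps {α : Type*} [DecidableEq α] (σ : Equiv.Perm α) : ℕ :=
  sInf {k | ∃ l : List (Equiv.Perm α), (∀ τ ∈ l, τ.IsSwap) ∧ l.prod = σ ∧ l.length = k}

/-- `dTrans π₁ π₂` is the least number of transpositions needed to express `π₂⁻¹ * π₁`. -/
noncomputable def dTrans {α : Type*} [DecidableEq α] (π₁ π₂ : Equiv.Perm α) : ℕ :=
  minSwaps (π₂⁻¹ * π₁)

open PhyloTree in
/-- If two phylogenetic trees with n leaves labeled 1,…,n have the same matching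
representation, then they are isomorphic as leaf-labeled rooted trees. -/
theorem matchRep_inj {n : ℕ} (T₁ T₂ : PhyloTree n)
    (ℓ₁ : Fin T₁.numNodes → ℕ) (ℓ₂ : Fin T₂.numNodes → ℕ)
    (h₁ : T₁.IsBUO ℓ₁) (h₂ : T₂.IsBUO ℓ₂)
    (hM : T₁.matchRep ℓ₁ = T₂.matchRep ℓ₂) : PhyloIso T₁ T₂ := by
  classical
  have hN : T₁.numNodes = T₂.numNodes := by
    have big : ((Finset.univ.erase T₁.root).image ℓ₁).card
        = ((Finset.univ.erase T₂.root).image ℓ₂).card := by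
      rw [← matchRep_biUnion (ℓ := ℓ₁), ← matchRep_biUnion (ℓ := ℓ₂), hM]
    rw [Finset.card_image_of_injective _ h₁.1, Finset.card_image_of_injective _ h₂.1,
      Finset.card_erase_of_mem (Finset.mem_univ _),
      Finset.card_erase_of_mem (Finset.mem_univ _)] at big
    simp only [Finset.card_univ, Fintype.card_fin] at big
    have p1 := T₁.numNodes_pos; have p2 := T₂.numNodes_pos
    omega
  -- the key lemma, by strong induction on the label
  have key : ∀ a (v₁ : Fin T₁.numNodes) (v₂ : Fin T₂.numNodes), ℓ₁ v₁ = a → ℓ₂ v₂ = a →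
      (T₁.children v₁).image ℓ₁ = (T₂.children v₂).image ℓ₂
        ∧ T₁.height v₁ = T₂.height v₂ := by
    intro a
    induction a using Nat.strong_induction_on with
    | _ a ih =>
    intro v₁ v₂ e₁ e₂
    by_cases hl1 : T₁.IsLeaf v₁
    · have hle : ℓ₁ v₁ ≤ n := (isLeaf_label_le h₁).mp hl1
      have hl2 : T₂.IsLeaf v₂ := (isLeaf_label_le h₂).mpr (by omega)
      have hc1 : T₁.children v₁ = ∅ := hl1
      have hc2 : T₂.children v₂ = ∅ := hl2
      rw [hc1, hc2, height_leaf hl1, height_leaf hl2]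
      simp
    · have hl2 : ¬ T₂.IsLeaf v₂ := by
        intro hlf
        have := (isLeaf_label_le h₂).mp hlf
        exact hl1 ((isLeaf_label_le h₁).mpr (by omega))
      have hB1 : (T₁.children v₁).image ℓ₁ ∈ T₂.matchRep ℓ₂ := by
        rw [← hM, mem_matchRep]; exact ⟨v₁, hl1, rfl⟩
      rw [mem_matchRep] at hB1
      obtain ⟨u₂, hu₂, hu₂B⟩ := hB1
      have hB2 : (T₂.children v₂).image ℓ₂ ∈ T₁.matchRep ℓ₁ := by
        rw [hM, mem_matchRep]; exact ⟨v₂, hl2, rfl⟩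
      rw [mem_matchRep] at hB2
      obtain ⟨u₁, hu₁, hu₁B⟩ := hB2
      have hmemlt1 : ∀ m ∈ (T₁.children v₁).image ℓ₁, m < a := by
        intro m hm
        obtain ⟨w, hw, rfl⟩ := Finset.mem_image.mp hm
        have := label_child_lt h₁ hw
        omega
      have hmemlt2 : ∀ m ∈ (T₂.children v₂).image ℓ₂, m < a := by
        intro m hm
        obtain ⟨w, hw, rfl⟩ := Finset.mem_image.mp hm
        have := label_child_lt h₂ hw
        omega
      have hsame : ∀ (x₁ : Fin T₁.numNodes) (x₂ : Fin T₂.numNodes),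
          (T₁.children x₁).image ℓ₁ = (T₂.children x₂).image ℓ₂ →
          (∀ m ∈ (T₁.children x₁).image ℓ₁, m < a) →
          T₁.height x₁ = T₂.height x₂ := by
        intro x₁ x₂ hEq hlt
        apply le_antisymm
        · by_cases hx : T₁.IsLeaf x₁
          · rw [height_leaf hx]; exact Nat.zero_le _
          · obtain ⟨w, hw, hwh⟩ := height_internal hx
            have hmem : ℓ₁ w ∈ (T₂.children x₂).image ℓ₂ := by
              rw [← hEq]; exact Finset.mem_image_of_mem _ hw
            obtain ⟨w', hw', hww'⟩ := Finset.mem_image.mp hmem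
            have hh := (ih (ℓ₁ w) (hlt _ (Finset.mem_image_of_mem _ hw)) w w' rfl hww').2
            rw [hwh, hh, ← hww'] at *
            exact Nat.succ_le_of_lt (by rw [← hh]; rw [hh]; exact height_child_lt hw')
        · by_cases hx : T₂.IsLeaf x₂
          · rw [height_leaf hx]; exact Nat.zero_le _
          · obtain ⟨w', hw', hwh⟩ := height_internal hx
            have hmem : ℓ₂ w' ∈ (T₁.children x₁).image ℓ₁ := by
              rw [hEq]; exact Finset.mem_image_of_mem _ hw'
            obtain ⟨w, hw, hww⟩ := Finset.mem_image.mp hmem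
            have hh := (ih (ℓ₂ w') (by rw [← hww]; exact hlt _ (Finset.mem_image_of_mem _ hw))
              w w' hww rfl).2
            rw [hwh, ← hh]
            exact Nat.succ_le_of_lt (height_child_lt hw)
      by_cases hBB : (T₁.children v₁).image ℓ₁ = (T₂.children v₂).image ℓ₂
      · exact ⟨hBB, hsame v₁ v₂ hBB hmemlt1⟩
      · exfalso
        have hgv1 : T₁.height v₁ = T₂.height u₂ := hsame v₁ u₂ hu₂B.symm hmemlt1
        have hgu1 : T₁.height u₁ = T₂.height v₂ := hsame u₁ v₂ hu₁B
          (by rw [hu₁B]; exact hmemlt2)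
        have hm1 : T₁.minChildLabel ℓ₁ v₁ = T₂.minChildLabel ℓ₂ u₂ := by
          rw [minChildLabel_eq, minChildLabel_eq, hu₂B]
        have hm2 : T₁.minChildLabel ℓ₁ u₁ = T₂.minChildLabel ℓ₂ v₂ := by
          rw [minChildLabel_eq, minChildLabel_eq, hu₁B]
        have hv1u1 : v₁ ≠ u₁ := fun h => hBB (by rw [h, hu₁B])
        have hmne : T₁.minChildLabel ℓ₁ v₁ ≠ T₁.minChildLabel ℓ₁ u₁ := by
          intro hEq
          have q1 := minChildLabel_mem (T := T₁) (ℓ := ℓ₁) hl1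
          have q2 := minChildLabel_mem (T := T₁) (ℓ := ℓ₁) hu₁
          rw [hEq] at q1
          obtain ⟨y, hy, hyl⟩ := Finset.mem_image.mp q2
          obtain ⟨x, hx, hxl⟩ := Finset.mem_image.mp q1
          have hxy : x = y := h₁.1 (hxl.trans hyl.symm)
          subst hxy
          exact hv1u1 (eq_of_mem_children hx hy)
        have contraA : ℓ₂ u₂ < a → False := by
          intro hlt'
          obtain ⟨w₁, hw₁⟩ := label_surj h₁ (h₂.2.1 u₂).1 (by rw [hN]; exact (h₂.2.1 u₂).2)
          have hkey := (ih (ℓ₂ u₂) hlt' w₁ u₂ hw₁ rfl).1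
          rw [hu₂B] at hkey
          have hwne : w₁ ≠ v₁ := by
            intro h
            rw [h, e₁] at hw₁
            omega
          obtain ⟨x, hx⟩ := Finset.nonempty_iff_ne_empty.mpr hl1
          have hmem : ℓ₁ x ∈ (T₁.children w₁).image ℓ₁ := by
            rw [hkey]; exact Finset.mem_image_of_mem _ hx
          obtain ⟨y, hy, hyx⟩ := Finset.mem_image.mp hmem
          have : y = x := h₁.1 hyx
          subst this
          exact hwne (eq_of_mem_children hy hx)
        have contraB : ℓ₁ u₁ < a → False := by
          intro hlt'
          obtain ⟨w₂, hw₂⟩ := label_surj h₂ (h₁.2.1 u₁).1 (by rw [← hN]; exact (h₁.2.1 u₁).2)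
          have hkey := (ih (ℓ₁ u₁) hlt' u₁ w₂ rfl hw₂).1
          have hEq2 : (T₂.children w₂).image ℓ₂ = (T₂.children v₂).image ℓ₂ := by
            rw [← hkey, hu₁B]
          have hwne : w₂ ≠ v₂ := by
            intro h
            rw [h, e₂] at hw₂
            omega
          obtain ⟨x, hx⟩ := Finset.nonempty_iff_ne_empty.mpr hl2
          have hmem : ℓ₂ x ∈ (T₂.children w₂).image ℓ₂ := by
            rw [hEq2]; exact Finset.mem_image_of_mem _ hx
          obtain ⟨y, hy, hyx⟩ := Finset.mem_image.mp hmem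
          have : y = x := h₂.1 hyx
          subst this
          exact hwne (eq_of_mem_children hy hx)
        rcases lt_trichotomy (T₁.height v₁) (T₁.height u₁) with hlt | heqh | hgt
        · have : ℓ₂ u₂ < ℓ₂ v₂ :=
            h₂.2.2.2.1 _ _ (by rw [← hgv1, ← hgu1]; exact hlt)
          exact contraA (by omega)
        · rcases lt_or_gt_of_ne hmne with hm | hm
          · have hp : 0 < T₂.height u₂ := by
              rw [← hgv1]
              exact Nat.pos_of_ne_zero (fun hz => hl1 (height_eq_zero hz))
            have : ℓ₂ u₂ < ℓ₂ v₂ := h₂.2.2.2.2 _ _ hp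
              (by rw [← hgv1, ← hgu1]; exact heqh) (by rw [← hm1, ← hm2]; exact hm)
            exact contraA (by omega)
          · have hp : 0 < T₁.height u₁ :=
              Nat.pos_of_ne_zero (fun hz => hu₁ (height_eq_zero hz))
            have : ℓ₁ u₁ < ℓ₁ v₁ := h₁.2.2.2.2 _ _ hp heqh.symm hm
            exact contraB (by omega)
        · have : ℓ₁ u₁ < ℓ₁ v₁ := h₁.2.2.2.1 _ _ hgt
          exact contraB (by omega)
  -- construct the isomorphism
  have surj2 : ∀ v₁ : Fin T₁.numNodes, ∃ w, ℓ₂ w = ℓ₁ v₁ := fun v₁ =>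
    label_surj h₂ (h₁.2.1 v₁).1 (by rw [← hN]; exact (h₁.2.1 v₁).2)
  choose g hg using surj2
  have ginj : Function.Injective g := fun u v h => h₁.1 (by rw [← hg, ← hg, h])
  have gsurj : Function.Surjective g := by
    intro w
    obtain ⟨v, hv⟩ := label_surj h₁ (h₂.2.1 w).1 (by rw [hN]; exact (h₂.2.1 w).2)
    exact ⟨v, h₂.1 (by rw [hg, hv])⟩
  have hroot : g T₁.root = T₂.root := by
    by_contra hne
    have hc : g T₁.root ∈ T₂.children (T₂.parent (g T₁.root)) :=
      mem_children.mpr ⟨rfl, hne⟩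
    have hBm : (T₂.children (T₂.parent (g T₁.root))).image ℓ₂ ∈ T₁.matchRep ℓ₁ := by
      rw [hM, mem_matchRep]
      refine ⟨T₂.parent (g T₁.root), ?_, rfl⟩
      intro hleaf
      have : T₂.children (T₂.parent (g T₁.root)) = ∅ := hleaf
      rw [this] at hc
      simp at hc
    rw [mem_matchRep] at hBm
    obtain ⟨u, hu, huB⟩ := hBm
    have hmem : ℓ₂ (g T₁.root) ∈ (T₁.children u).image ℓ₁ := by
      rw [huB]; exact Finset.mem_image_of_mem _ hc
    obtain ⟨x, hx, hxl⟩ := Finset.mem_image.mp hmem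
    have : x = T₁.root := h₁.1 (by rw [hxl, hg])
    exact (mem_children.mp hx).2 this
  refine ⟨Equiv.ofBijective g ⟨ginj, gsurj⟩, hroot, ?_, ?_⟩
  · intro v
    show g (T₁.parent v) = T₂.parent (g v)
    by_cases hv : v = T₁.root
    · subst hv
      rw [T₁.parent_root, hroot, T₂.parent_root]
    · have hvc : v ∈ T₁.children (T₁.parent v) := mem_children.mpr ⟨rfl, hv⟩
      have hkey := (key (ℓ₁ (T₁.parent v)) (T₁.parent v) (g (T₁.parent v)) rfl (hg _)).1
      have hmem : ℓ₂ (g v) ∈ (T₂.children (g (T₁.parent v))).image ℓ₂ := by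
        rw [← hkey, hg]
        exact Finset.mem_image_of_mem _ hvc
      obtain ⟨x, hx, hxl⟩ := Finset.mem_image.mp hmem
      have : x = g v := h₂.1 hxl
      subst this
      exact ((mem_children.mp hx).1).symm
  · intro v hv
    show T₂.labelOf (g v) = T₁.labelOf v
    have hleq : ℓ₁ v ≤ n := (isLeaf_label_le h₁).mp hv
    have hleaf2 : T₂.IsLeaf (g v) := (isLeaf_label_le h₂).mpr (by rw [hg]; exact hleq)
    rw [← h₂.2.2.1 _ hleaf2, ← h₁.2.2.1 _ hv, hg]
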